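/- arXiv:1405.4807 — 2 statements merged into one kernel-verified Lean document; each statement's English description precedes it below -/
import Mathlib

section
/- Let X be a symmetric positive semidefinite block matrix with blocks X_{ij} (1 ≤ i,j ≤ n), each block of size m×m, and let x_1,...,x_n ∈ ℝ^m be vectors such that the augmented matrix [[1, x^T],[x, X]] is positive semidefinite (where x is the concatenation of the x_i). Suppose X_{ii} = Diag(x_i) and 1^T x_i = 1 for all i. Then for all 1 ≤ i < j ≤ n, the off-diagonal blocks satisfy X_{ij} 1 = x_i and X_{ij}^T 1 = x_j. -/
/-!
If `M` is positive semidefinite then `zᵀ M z = 0` forces `M z = 0`. For the bordered matrix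
`M = [[1, xᵀ], [x, X]]` and `z = (-1, v)` one has `zᵀ M z = 1 - 2 xᵀv + vᵀXv` and
`M z = (xᵀv - 1, X v - x)`, so `xᵀv = vᵀXv = 1` gives `X v = x`. Taking for `v` the indicator
of the `k`-th block, `xᵀv = 1ᵀx_k = 1` and `vᵀXv = 1ᵀ Diag(x_k) 1 = 1`, hence `X_{ik} 1 = x_i`
for all `i`; the symmetry of `X` turns this into `X_{ij}ᵀ 1 = x_j`.
-/

open Matrix

/-- The bordered matrix [[1, xᵀ],[x, X]]. -/
def bordered {N : Type*} (x : N → ℝ) (X : Matrix N N ℝ) :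
    Matrix (Unit ⊕ N) (Unit ⊕ N) ℝ :=
  Matrix.fromBlocks 1 (Matrix.replicateRow Unit x) (Matrix.replicateCol Unit x) X

section Bordered

variable {N : Type*} [Fintype N]

theorem bordered_mulVec_sumElim (x : N → ℝ) (X : Matrix N N ℝ) (c : ℝ) (v : N → ℝ) :
    bordered x X *ᵥ Sum.elim (fun _ => c) v =
      Sum.elim (fun _ => c + x ⬝ᵥ v) (c • x + X *ᵥ v) := by
  ext (_ | i)
  · simp [bordered, mulVec, dotProduct]
  · simp [bordered, mulVec, dotProduct, mul_comm]

theorem mulVec_eq_of_bordered_posSemidef {x : N → ℝ} {X : Matrix N N ℝ}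
    (h : (bordered x X).PosSemidef) {v : N → ℝ}
    (hxv : x ⬝ᵥ v = 1) (hvXv : v ⬝ᵥ X *ᵥ v = 1) : X *ᵥ v = x := by
  set z : Unit ⊕ N → ℝ := Sum.elim (fun _ => -1) v
  have hMz : bordered x X *ᵥ z = Sum.elim (fun _ => 0) (X *ᵥ v - x) := by
    rw [bordered_mulVec_sumElim, hxv]
    ext (_ | i) <;> simp [sub_eq_neg_add]
  have hzMz : star z ⬝ᵥ bordered x X *ᵥ z = 0 := by
    rw [hMz, star_trivial, sumElim_dotProduct_sumElim, dotProduct_sub, hvXv, dotProduct_comm v x,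
      hxv]
    simp
  have hker := (h.dotProduct_mulVec_zero_iff z).mp hzMz
  rw [hMz] at hker
  exact sub_eq_zero.mp (congrArg (· ∘ Sum.inr) hker)

end Bordered

def blockIndicator {ι κ : Type*} [DecidableEq ι] (k : ι) : ι × κ → ℝ :=
  fun p => if p.1 = k then 1 else 0

section BlockIndicator

variable {ι κ : Type*} [Fintype ι] [Fintype κ] [DecidableEq ι]

theorem dotProduct_blockIndicator (w : ι × κ → ℝ) (k : ι) :
    w ⬝ᵥ blockIndicator k = ∑ a, w (k, a) := by
  rw [dotProduct, Fintype.sum_prod_type, Fintype.sum_eq_single k] <;> simp_all [blockIndicator]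

theorem mulVec_blockIndicator (X : Matrix (ι × κ) (ι × κ) ℝ) (k : ι) (q : ι × κ) :
    (X *ᵥ blockIndicator k) q = ∑ a, X q (k, a) :=
  dotProduct_blockIndicator (X q) k

end BlockIndicator

/-- Theorem 1: the SDR constraints imply the LP marginalization constraints
`X_{ij} 1 = x_i` and `X_{ij}ᵀ 1 = x_j` on every off-diagonal block. -/
theorem sdr_marginalization (n m : ℕ) (X : Matrix (Fin n × Fin m) (Fin n × Fin m) ℝ)
    (x : Fin n → Fin m → ℝ)
    (hpsd : (bordered (fun p => x p.1 p.2) X).PosSemidef)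
    (hdiag : ∀ i : Fin n, ∀ a b : Fin m,
      X (i, a) (i, b) = if a = b then x i a else 0)
    (hsum : ∀ i : Fin n, ∑ a, x i a = 1) :
    ∀ i j : Fin n, i < j →
      (∀ a : Fin m, ∑ b, X (i, a) (j, b) = x i a) ∧
      (∀ b : Fin m, ∑ a, X (i, a) (j, b) = x j b) := by
  have hblock_sum : ∀ k (q : Fin n × Fin m), ∑ a, X q (k, a) = x q.1 q.2 := by
    intro k q
    have hdiag_sum : ∀ b, ∑ a, X (k, b) (k, a) = x k b := by simp [hdiag]
    have hXv := mulVec_eq_of_bordered_posSemidef hpsd (v := blockIndicator k)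
      (by rw [dotProduct_blockIndicator, hsum])
      (by simp only [dotProduct_comm _ (X *ᵥ _), dotProduct_blockIndicator, mulVec_blockIndicator,
        hdiag_sum, hsum])
    rw [← mulVec_blockIndicator, hXv]
  intro i j _
  refine ⟨fun a => hblock_sum j (i, a), fun b => ?_⟩
  rw [← hblock_sum i (j, b)]
  exact Finset.sum_congr rfl fun a _ => hpsd.isHermitian.apply (Sum.inr (j, b)) (Sum.inr (i, a))
end

section
/- Let (x, X) satisfy the SDR constraints and suppose additionally rank([[1,x^T],[x,X]]) = 1. Then X = x x^T, each entry of x lies in {0,1} and each block x_i has exactly one entry equal to 1, so x encodes a valid MAP assignment. -/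
open Matrix

lemma minor_vanish {N : Type*} [Fintype N] [DecidableEq N] (M : Matrix N N ℝ)
    (h : M.rank = 1) : ∀ i j k l, M i j * M k l = M i l * M k j := by
  rw [Matrix.rank] at h
  obtain ⟨v, hv0, hv⟩ := finrank_eq_one_iff'.mp h
  have hc : ∀ j : N, ∃ c : ℝ, ∀ i, M i j = c * (v : N → ℝ) i := by
    intro j
    obtain ⟨c, hcc⟩ := hv ⟨M.mulVec (Pi.single j 1), ⟨Pi.single j 1, rfl⟩⟩
    refine ⟨c, fun i => ?_⟩
    have := congrArg (fun w : LinearMap.range M.mulVecLin => (w : N → ℝ) i) hcc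
    simpa [Matrix.mulVec_single] using this.symm
  choose c hcc using hc
  intro i j k l
  rw [hcc j i, hcc l k, hcc l i, hcc j k]
  ring

/-- Exactness of rank-one SDR solutions: if (x, X) satisfies the SDR constraints
and the bordered matrix has rank 1, then X = x xᵀ, every entry of x is 0 or 1,
and each block x_i has exactly one entry equal to 1 (a valid MAP assignment). -/
theorem sdr_rank_one_exact (n m : ℕ) (x : Fin n × Fin m → ℝ)
    (X : Matrix (Fin n × Fin m) (Fin n × Fin m) ℝ)
    (hpsd : (bordered x X).PosSemidef)
    (hdiag : ∀ i : Fin n, ∀ a b : Fin m,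
      X (i, a) (i, b) = if a = b then x (i, a) else 0)
    (hsum : ∀ i : Fin n, ∑ a, x (i, a) = 1)
    (hnn : ∀ p q, 0 ≤ X p q)
    (hrank : (bordered x X).rank = 1) :
    X = Matrix.vecMulVec x x ∧
    (∀ p, x p = 0 ∨ x p = 1) ∧
    (∀ i : Fin n, ∃! a : Fin m, x (i, a) = 1) := by
  have key := minor_vanish _ hrank
  have hX : ∀ p q, X p q = x p * x q := by
    intro p q
    have := key (Sum.inr p) (Sum.inr q) (Sum.inl ()) (Sum.inl ())
    simpa [bordered, Matrix.fromBlocks_apply₁₁, Matrix.fromBlocks_apply₂₂,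
      Matrix.fromBlocks_apply₁₂, Matrix.fromBlocks_apply₂₁, Matrix.one_apply,
      Matrix.replicateRow_apply, Matrix.replicateCol_apply, mul_comm] using this
  have h01 : ∀ p, x p = 0 ∨ x p = 1 := by
    intro p
    have h1 : X p p = x p := by
      obtain ⟨i, a⟩ := p
      simpa using hdiag i a a
    have h2 := hX p p
    have : x p * (x p - 1) = 0 := by nlinarith [h1, h2]
    rcases mul_eq_zero.mp this with h | h
    · exact Or.inl h
    · exact Or.inr (by linarith)
  have hoff : ∀ i : Fin n, ∀ a b : Fin m, a ≠ b → x (i, a) * x (i, b) = 0 := by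
    intro i a b hab
    have := hdiag i a b
    rw [if_neg hab] at this
    rw [← hX]; exact this
  refine ⟨?_, h01, ?_⟩
  · ext p q
    rw [Matrix.vecMulVec_apply, hX]
  · intro i
    have hex : ∃ a, x (i, a) = 1 := by
      by_contra h
      push_neg at h
      have hz : ∀ a, x (i, a) = 0 := fun a => (h01 (i, a)).resolve_right (h a)
      have hs := hsum i
      rw [Finset.sum_congr rfl (fun a _ => hz a)] at hs
      simp at hs
    obtain ⟨a, ha⟩ := hex
    refine ⟨a, ha, fun b hb => ?_⟩
    by_contra hba
    have := hoff i b a (hba)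
    rw [ha, hb] at this
    norm_num at this
end
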